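/- Monomial symmetric functions of the b-deformed Jucys–Murphy operators and bt-monotone counts: Let k ≥ 1 and r ≥ 0. In the free ℤ[b,t]-module with basis 𝒫_k, Σ_{ν ⊢ r} t^{ℓ(ν)} m_ν^≥(𝒥_1,…,𝒥_k)(𝔢_k) = Σ_{μ ⊢ k} ĥ_r(μ) · 𝔭_μ, where for a partition ν of r with ℓ parts, m_ν^≥(𝒥_1,…,𝒥_k) = Σ 𝒥_{i_1}^{a_1} 𝒥_{i_2}^{a_2} ⋯ 𝒥_{i_ℓ}^{a_ℓ}, the sum being over all indices k ≥ i_1 > i_2 > ⋯ > i_ℓ ≥ 1 and all distinct sequences (a_1,…,a_ℓ) obtained by rearranging the parts of ν (the decreasing-index ordered analogue of the monomial symmetric polynomial m_ν). -/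

import Mathlib

open scoped Classical
open MeasureTheory



/-- A pair partition of `{1, …, 2k}`, encoded as an involution of `ℕ` that
moves exactly the points `1, …, 2k`.  The pairs are the two-element sets `{a, f a}`. -/
structure PairPartition (k : ℕ) where
  f : ℕ → ℕ
  invol : ∀ a, f (f a) = a
  moves : ∀ a, f a ≠ a ↔ (1 ≤ a ∧ a ≤ 2 * k)

namespace PairPartition

/-- The function underlying the identity (trivial) pair partition
`(1 2 | 3 4 | ⋯ | 2k-1 2k)`. -/
def trivFun (k : ℕ) (a : ℕ) : ℕ :=
  if 1 ≤ a ∧ a ≤ 2 * k then (if a % 2 = 1 then a + 1 else a - 1) else a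

/-- The identity pair partition `𝔢_k = (1 2 | 3 4 | ⋯ | 2k-1 2k)`. -/
def triv (k : ℕ) : PairPartition k where
  f := trivFun k
  invol := by intro a; unfold trivFun; split_ifs <;> omega
  moves := by intro a; unfold trivFun; split_ifs <;> omega

theorem ext' {k : ℕ} {m m' : PairPartition k} (h : m.f = m'.f) : m = m' := by
  cases m; cases m'; simpa using h

/-- The action of the transposition `(i j) ∈ S_{2k}` on pair partitions of `{1, …, 2k}`
(defined to do nothing if `i` or `j` lies outside `{1, …, 2k}`). -/
def swapAct {k : ℕ} (i j : ℕ) (m : PairPartition k) : PairPartition k :=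
  if h : 1 ≤ i ∧ i ≤ 2 * k ∧ 1 ≤ j ∧ j ≤ 2 * k then
    { f := fun a => Equiv.swap i j (m.f (Equiv.swap i j a))
      invol := by intro a; simp [m.invol]
      moves := by
        obtain ⟨hi1, hi2, hj1, hj2⟩ := h
        intro a
        have key : ∀ x y : ℕ, Equiv.swap i j x ≠ y ↔ x ≠ Equiv.swap i j y := by
          intro x y
          constructor
          · intro hxy hc; apply hxy; rw [hc]; simp
          · intro hxy hc; apply hxy; rw [← hc]; simp
        rw [key, ← Equiv.swap_apply_self i j a, Equiv.swap_apply_self i j a]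
        rw [m.moves (Equiv.swap i j a)]
        rcases eq_or_ne a i with rfl | hai
        · rw [Equiv.swap_apply_left]; omega
        rcases eq_or_ne a j with rfl | haj
        · rw [Equiv.swap_apply_right]; omega
        · rw [Equiv.swap_apply_of_ne_of_ne hai haj] }
  else m

/-- Removing the pair `{2k-1, 2k}` from a pair partition: the operation `𝔪 ↦ 𝔪↓`
(defined to return the trivial pair partition if `{2k-1, 2k} ∉ 𝔪`). -/
def down {k : ℕ} (m : PairPartition k) : PairPartition (k - 1) :=
  if h : m.f (2 * k - 1) = 2 * k then
    { f := fun a => if a = 2 * k - 1 ∨ a = 2 * k then a else m.f a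
      invol := by
        intro a
        by_cases ha : a = 2 * k - 1 ∨ a = 2 * k
        · simp [ha]
        · have h2k : m.f (2 * k) = 2 * k - 1 := by
            conv_lhs => rw [← h]
            exact m.invol _
          have hne1 : m.f a ≠ 2 * k - 1 := by
            intro hfa
            have h1 : m.f (m.f a) = m.f (2 * k - 1) := by rw [hfa]
            rw [m.invol, h] at h1
            exact ha (Or.inr h1)
          have hne2 : m.f a ≠ 2 * k := by
            intro hfa
            have h1 : m.f (m.f a) = m.f (2 * k) := by rw [hfa]
            rw [m.invol, h2k] at h1
            exact ha (Or.inl h1)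
          simp only [if_neg ha, if_neg (not_or.mpr ⟨hne1, hne2⟩), m.invol]
      moves := by
        intro a
        by_cases ha : a = 2 * k - 1 ∨ a = 2 * k
        · simp only [if_pos ha]
          rcases ha with ha | ha <;> subst ha <;> constructor <;> intro h' <;> first
            | exact absurd rfl h'
            | omega
        · push_neg at ha
          obtain ⟨ha1, ha2⟩ := ha
          simp only [if_neg (not_or.mpr ⟨ha1, ha2⟩)]
          rw [m.moves a]
          omega }
  else triv (k - 1)

/-- A pair partition as a permutation (involution) of `ℕ`. -/
def perm {k : ℕ} (m : PairPartition k) : Equiv.Perm ℕ :=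
  Function.Involutive.toPerm m.f m.invol

end PairPartition

namespace PairPartition

/-- The connected component (cycle) of the multigraph `Γ(𝔪)` containing a vertex `v`:
the orbit of `v` under the group generated by the involutions `𝔢_k` and `𝔪`. -/
def gammaOrbit {k : ℕ} (m : PairPartition k) (v : ℕ) : Set ℕ :=
  MulAction.orbit (Subgroup.closure {(triv k).perm, m.perm} : Subgroup (Equiv.Perm ℕ)) v

/-- The charge function of `Γ(𝔪)`: `charge m v` holds iff `v` receives charge `+`,
i.e. iff `v` is at even distance (in `Γ(𝔪)`) from the largest label of its cycle.
The vertices at even distance from the largest label `M` of a cycle are exactly the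
orbit of `M` under the cyclic group generated by `𝔪 ∘ 𝔢_k`. -/
def charge {k : ℕ} (m : PairPartition k) (v : ℕ) : Prop :=
  v ∈ MulAction.orbit (Subgroup.zpowers (m.perm * (triv k).perm) : Subgroup (Equiv.Perm ℕ))
        (sSup (gammaOrbit m v))

/-- The weight `ω^(b)(𝔪, (i j)·𝔪)` attached to the transposition `(i j)` acting on `𝔪`:
it is `1` if the charges of `i` and `j` in `Γ(𝔪)` agree, and `b` otherwise. -/
noncomputable def omegab {R : Type*} [CommRing R] (b : R) {k : ℕ}
    (m : PairPartition k) (i j : ℕ) : R :=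
  if (charge m i ↔ charge m j) then 1 else b

/-- The number of cycles of `Γ(𝔪)` of length `2ℓ`, i.e. the multiplicity of `ℓ`
in the coset-type `λ(𝔪)` of `𝔪`. -/
noncomputable def cycleCount {k : ℕ} (m : PairPartition k) (ℓ : ℕ) : ℕ :=
  (((Finset.Icc 1 (2 * k)).filter fun a => (gammaOrbit m a).ncard = 2 * ℓ).card) / (2 * ℓ)

/-- Two pair partitions have the same coset-type iff `Γ(𝔪)` and `Γ(𝔪')` have the same
number of cycles of every length. -/
def SameCosetType {k : ℕ} (m m' : PairPartition k) : Prop :=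
  ∀ ℓ : ℕ, cycleCount m ℓ = cycleCount m' ℓ

/-- The pair partition `𝔪` has coset-type the multiset `μ` (a partition of `k`,
presented as the multiset of its parts). -/
def HasCosetType {k : ℕ} (m : PairPartition k) (μ : Multiset ℕ) : Prop :=
  ∀ ℓ : ℕ, 1 ≤ ℓ → μ.count ℓ = cycleCount m ℓ

/-- All lists of length `n` with entries in the finset `S`. -/
def listsLen (S : Finset (ℕ × ℕ)) : ℕ → Finset (List (ℕ × ℕ))
  | 0 => {[]}
  | n + 1 => (S ×ˢ listsLen S n).image fun p => p.1 :: p.2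

/-- Apply a sequence `τ = (τ_1, …, τ_r)` of transpositions (each encoded as a pair)
to a pair partition, the rightmost transposition acting first:
`τ_1 ∘ τ_2 ∘ ⋯ ∘ τ_r · 𝔪`. -/
def applyFacts {k : ℕ} (l : List (ℕ × ℕ)) (m : PairPartition k) : PairPartition k :=
  l.foldr (fun t acc => swapAct t.1 t.2 acc) m

/-- `l` is a monotone factorisation of the pair partition `𝔪 ∈ 𝒫_k`: a sequence of
transpositions `(a_s b_s)` with `a_s < b_s`, all `b_s` odd, `b_1 ≤ b_2 ≤ ⋯ ≤ b_r`,
and `τ_1 ∘ ⋯ ∘ τ_r · 𝔪 = 𝔢_k`. -/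
def IsMonoFact {k : ℕ} (m : PairPartition k) (l : List (ℕ × ℕ)) : Prop :=
  (∀ t ∈ l, 1 ≤ t.1 ∧ t.1 < t.2 ∧ t.2 ≤ 2 * k ∧ Odd t.2) ∧
  List.Pairwise (· ≤ ·) (l.map Prod.snd) ∧
  applyFacts l m = triv k

/-- The hive number of a monotone factorisation: the number of distinct values among
`b_1, …, b_r`. -/
def hive (l : List (ℕ × ℕ)) : ℕ := (l.map Prod.snd).toFinset.card

/-- The flip number of a monotone factorisation `τ` of `𝔪`: the number of indices `s`
with `ω^(b)(𝔪^(s), τ_s · 𝔪^(s)) = b`, where `𝔪^(s) = τ_{s+1} ∘ ⋯ ∘ τ_r · 𝔪`. -/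
noncomputable def flip {k : ℕ} (m : PairPartition k) : List (ℕ × ℕ) → ℕ
  | [] => 0
  | t :: rest =>
      (if (charge (applyFacts rest m) t.1 ↔ charge (applyFacts rest m) t.2) then 0 else 1)
        + flip m rest

/-- The finset of monotone factorisations of `𝔪 ∈ 𝒫_k` of length `r`. -/
noncomputable def monoFinset {k : ℕ} (m : PairPartition k) (r : ℕ) : Finset (List (ℕ × ℕ)) :=
  (listsLen ((Finset.Icc 1 (2 * k)) ×ˢ (Finset.Icc 1 (2 * k))) r).filter fun l => IsMonoFact m l

/-- A sequence of transpositions is connected (relative to level `k`) if together with the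
involution `ι = (1 2)(3 4)⋯(2k-1 2k)` it generates a subgroup acting transitively on
`{1, …, 2k}`. -/
def IsConnectedFact (k : ℕ) (l : List (ℕ × ℕ)) : Prop :=
  ∀ a ∈ Finset.Icc 1 (2 * k), ∀ b ∈ Finset.Icc 1 (2 * k),
    ∃ σ ∈ Subgroup.closure
        ({(triv k).perm} ∪ {p : Equiv.Perm ℕ | ∃ t ∈ l, p = Equiv.swap t.1 t.2}),
      σ a = b

end PairPartition


noncomputable instance matrixMeasurableSpace {N : ℕ} :
    MeasurableSpace (Matrix (Fin N) (Fin N) ℝ) :=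
  inferInstanceAs (MeasurableSpace (Fin N → Fin N → ℝ))

/-- The compact group `O(N)` of real orthogonal `N × N` matrices. -/
abbrev OrthGroup (N : ℕ) := Matrix.orthogonalGroup (Fin N) ℝ

noncomputable instance orthMeasurableSpace {N : ℕ} : MeasurableSpace (OrthGroup N) :=
  borel _

/-- The diagonal matrix `I_{M,N}` whose first `M` diagonal entries are `1` and whose
remaining entries are `0`. -/
def IMN (N M : ℕ) : Matrix (Fin N) (Fin N) ℝ :=
  Matrix.diagonal fun p => if (p : ℕ) < M then (1 : ℝ) else 0

/-- The map `O ↦ O · I_{M,N} · Oᵀ` from `O(N)` onto the space `A(M,N)` of idempotent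
real symmetric `N × N` matrices of rank `M`. -/
def grassMap (N M : ℕ) (O : OrthGroup N) : Matrix (Fin N) (Fin N) ℝ :=
  (O : Matrix (Fin N) (Fin N) ℝ) * IMN N M * Matrix.transpose (O : Matrix (Fin N) (Fin N) ℝ)


/-- The product `A_{i(1)i(2)} A_{i(3)i(4)} ⋯ A_{i(2k-1)i(2k)}` of matrix entries. -/
def prodEntries {N : ℕ} (k : ℕ) (i : ℕ → Fin N) (A : Matrix (Fin N) (Fin N) ℝ) : ℝ :=
  ∏ a ∈ Finset.range k, A (i (2 * a + 1)) (i (2 * a + 2))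



open PairPartition


/-- A step in the (`b`- or `bt`-) Weingarten graph: a type-A edge `𝔪 → (i 2k-1)·𝔪`,
a type-B edge `𝔪 → 𝔪↓`, or a type-C edge `𝔪 → ((i 2k-1)·𝔪)↓`. -/
inductive WStep where
  | A (i : ℕ) : WStep
  | B : WStep
  | C (i : ℕ) : WStep
deriving DecidableEq

/-- `IsPathTo k 𝔪 ρ` holds iff `ρ` is a path in the `bt`-Weingarten graph from the
pair partition `𝔪 ∈ 𝒫_k` to the empty pair partition. -/
def IsPathTo : (k : ℕ) → PairPartition k → List WStep → Prop
  | 0, _, [] => True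
  | _ + 1, _, [] => False
  | 0, _, _ :: _ => False
  | k + 1, m, WStep.A i :: ρ =>
      1 ≤ i ∧ i ≤ 2 * (k + 1) - 2 ∧ IsPathTo (k + 1) (swapAct i (2 * (k + 1) - 1) m) ρ
  | k + 1, m, WStep.B :: ρ =>
      m.f (2 * (k + 1) - 1) = 2 * (k + 1) ∧ IsPathTo k (down m) ρ
  | k + 1, m, WStep.C i :: ρ =>
      1 ≤ i ∧ i ≤ 2 * (k + 1) - 2 ∧ m.f i = 2 * (k + 1) ∧
        IsPathTo k (down (swapAct i (2 * (k + 1) - 1) m)) ρ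

/-- The product of the `b`-dependent edge weights along a path. -/
noncomputable def pathWeight {R : Type*} [CommRing R] (b : R) :
    (k : ℕ) → PairPartition k → List WStep → R
  | _, _, [] => 1
  | 0, _, _ :: _ => 1
  | k + 1, m, WStep.A i :: ρ =>
      omegab b m i (2 * (k + 1) - 1) * pathWeight b (k + 1) (swapAct i (2 * (k + 1) - 1) m) ρ
  | k + 1, m, WStep.B :: ρ => pathWeight b k (down m) ρ
  | k + 1, m, WStep.C i :: ρ => pathWeight b k (down (swapAct i (2 * (k + 1) - 1) m)) ρ

/-- The number of type-A edges of a path. -/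
def countA (l : List WStep) : ℕ :=
  (l.filter fun s => match s with | WStep.A _ => true | _ => false).length

/-- The number of type-B edges of a path. -/
def countB (l : List WStep) : ℕ :=
  (l.filter fun s => match s with | WStep.B => true | _ => false).length

/-- The number of type-C edges of a path. -/
def countC (l : List WStep) : ℕ :=
  (l.filter fun s => match s with | WStep.C _ => true | _ => false).length

/-- The `b`-Weingarten function `Wg^(b)(𝔪) ∈ ℤ[b]⟦X⟧`: the coefficient of `X^n` is the
sum of `(-1)^{ℓ_A(ρ)} w(ρ)` over all paths `ρ` (with no type-C edges, i.e. paths in the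
`b`-Weingarten graph) from `𝔪` to the empty pair partition with `ℓ_A(ρ) + ℓ_B(ρ) = n`.
Here `b` is the polynomial variable of `ℤ[b]`. -/
noncomputable def WgB (k : ℕ) (m : PairPartition k) : PowerSeries (Polynomial ℤ) :=
  PowerSeries.mk fun n =>
    ∑ᶠ (ρ : List WStep)
      (_ : IsPathTo k m ρ ∧ (∀ i, WStep.C i ∉ ρ) ∧ countA ρ + countB ρ = n),
      (-1 : Polynomial ℤ) ^ countA ρ * pathWeight (Polynomial.X : Polynomial ℤ) k m ρ

/-- The `bt`-Weingarten function `Wg^(bt)(𝔪) ∈ (ℤ[b,y])⟦X⟧`: the coefficient of `X^n` is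
the sum of `(-1)^{ℓ_A(ρ)} y^{ℓ_B(ρ)} w(ρ)` over all paths `ρ` in the `bt`-Weingarten graph
from `𝔪` to the empty pair partition with `ℓ_A(ρ) + ℓ_C(ρ) = n`.  Here `b = X 0` and
`y = X 1` in `ℤ[b,y] = MvPolynomial (Fin 2) ℤ`. -/
noncomputable def WgBT (k : ℕ) (m : PairPartition k) :
    PowerSeries (MvPolynomial (Fin 2) ℤ) :=
  PowerSeries.mk fun n =>
    ∑ᶠ (ρ : List WStep) (_ : IsPathTo k m ρ ∧ countA ρ + countC ρ = n),
      (-1 : MvPolynomial (Fin 2) ℤ) ^ countA ρ * (MvPolynomial.X 1) ^ countB ρ *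
        pathWeight (MvPolynomial.X 0 : MvPolynomial (Fin 2) ℤ) k m ρ

/-- The standard basis vector `𝔪` of the free module with basis `𝒫_k`,
realised as functions `𝒫_k → R`. -/
noncomputable def basisVec {R : Type*} [CommRing R] (k : ℕ) (m : PairPartition k) :
    PairPartition k → R :=
  fun n => if n = m then 1 else 0

/-- The `b`-deformed Jucys–Murphy operator `𝒥_i` acting on the free module with basis
`𝒫_k` (realised as functions `𝒫_k → R`): on basis vectors,
`𝒥_i(𝔪) = ∑_{a=1}^{2i-2} ω^(b)((a 2i-1)·𝔪, 𝔪) · (a 2i-1)·𝔪`. -/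
noncomputable def JbOp {R : Type*} [CommRing R] (b : R) {k : ℕ} (i : ℕ)
    (v : PairPartition k → R) : PairPartition k → R :=
  fun n => ∑ a ∈ Finset.Icc 1 (2 * i - 2),
    omegab b n a (2 * i - 1) * v (swapAct a (2 * i - 1) n)

/-- The (odd) Jucys–Murphy element `J_{2i-1} = ∑_{a=1}^{2i-2} (a
 2i-1)` of the group
algebra of `S_{2k}`, acting on the free module with basis `𝒫_k` via the linear extension
of the `S_{2k}`-action on pair partitions. -/
noncomputable def JoddOp {R : Type*} [CommRing R] {k : ℕ} (i : ℕ)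
    (v : PairPartition k → R) : PairPartition k → R :=
  fun n => ∑ a ∈ Finset.Icc 1 (2 * i - 2), v (swapAct a (2 * i - 1) n)

/-- The vector `𝔭_μ = ∑_{𝔪 : λ(𝔪) = μ} 𝔪`, i.e. the indicator function of the set of
pair partitions of coset-type `μ`. -/
noncomputable def pVec {R : Type*} [CommRing R] (k : ℕ) (μ : Multiset ℕ) :
    PairPartition k → R :=
  fun m => if HasCosetType m μ then 1 else 0

noncomputable def applyPows {R : Type*} [CommRing R] (b : R) {k : ℕ} :
    List (ℕ × ℕ) → (PairPartition k → R) → (PairPartition k → R)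
  | [], v => v
  | ia :: rest, v => (JbOp b ia.1)^[ia.2] (applyPows b rest v)


/-- The coefficient ring `ℤ[b,y]⟦X⟧`, with `b = X 0` and `y = X 1`. -/
abbrev SeriesRing := PowerSeries (MvPolynomial (Fin 2) ℤ)

noncomputable def bS : SeriesRing := PowerSeries.C (MvPolynomial.X 0)
noncomputable def yS : SeriesRing := PowerSeries.C (MvPolynomial.X 1)

/-- The operator-valued power series `(1 + X·𝒥_i)⁻¹ = ∑_{j ≥ 0} (-X)^j 𝒥_i^j`
applied to a vector `v`, computed coefficientwise. -/
noncomputable def invApply (k : ℕ) (i : ℕ) (v : PairPartition k → SeriesRing) :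
    PairPartition k → SeriesRing :=
  fun n => PowerSeries.mk fun d =>
    ∑ᶠ j : ℕ, PowerSeries.coeff d
      ((-(PowerSeries.X : SeriesRing)) ^ j * ((JbOp bS i)^[j] v) n)

/-- The vector `(y + X𝒥_j)(1 + X𝒥_j)⁻¹ ⋯ (y + X𝒥_1)(1 + X𝒥_1)⁻¹ (𝔢_k)`. -/
noncomputable def prodVec (k : ℕ) : ℕ → (PairPartition k → SeriesRing)
  | 0 => fun n => if n = triv k then 1 else 0
  | j + 1 => fun n =>
      yS * invApply k (j + 1) (prodVec k j) n +
        PowerSeries.X * (JbOp bS (j + 1) (invApply k (j + 1) (prodVec k j))) n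


open MvPolynomial

/-- The formal partial derivative `∂_n = ∂/∂p_n` on the polynomial ring
`K[p_1, p_2, …]` (the variables being indexed by positive naturals);
junk value `0` for `n = 0`. -/
noncomputable def pd (K : Type*) [CommRing K] (n : ℕ) :
    MvPolynomial ℕ+ K →ₗ[K] MvPolynomial ℕ+ K :=
  if h : 0 < n then (pderiv (⟨n, h⟩ : ℕ+)).toLinearMap else 0

/-- The variable `p_n` of `K[p_1, p_2, …]`; junk value `0` for `n = 0`. -/
noncomputable def pvar (K : Type*) [CommRing K] (n : ℕ) : MvPolynomial ℕ+ K :=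
  if h : 0 < n then X ⟨n, h⟩ else 0

section SumOp

variable (K : Type*) [CommRing K]

lemma sumOp_support_subset (m : ℕ) (f : MvPolynomial ℕ+ K) :
    (Function.support fun i => ((i + m : ℕ) : K) • (pvar K i * pd K (i + m) f)) ⊆
      ((fun i => i + m) ⁻¹' ↑(f.vars.image (fun v : ℕ+ => (v : ℕ)))) := by
  intro i hi
  simp only [Function.mem_support] at hi
  by_contra hmem
  apply hi
  rcases Nat.eq_zero_or_pos (i + m) with h0 | h0
  · have hi0 : i = 0 := by omega
    subst hi0
    simp [pvar]
  · have hnot : (⟨i + m, h0⟩ : ℕ+) ∉ f.vars := by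
      intro hv
      apply hmem
      simp only [Set.mem_preimage, Finset.coe_image, Set.mem_image, Finset.mem_coe]
      exact ⟨⟨i + m, h0⟩, hv, rfl⟩
    have hz : pd K (i + m) f = 0 := by
      have hp := pderiv_eq_zero_of_notMem_vars (R := K) hnot
      unfold pd
      first
        | exact (congrArg (fun g => g f) (dif_pos h0)).trans hp
        | (erw [dif_pos h0]; exact hp)
        | (simp only [h0, dite_true]; exact hp)
    rw [hz, mul_zero, smul_zero]

lemma sumOp_support_finite (m : ℕ) (f : MvPolynomial ℕ+ K) :
    (Function.support fun i => ((i + m : ℕ) : K) • (pvar K i * pd K (i + m) f)).Finite := by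
  apply Set.Finite.subset _ (sumOp_support_subset K m f)
  apply Set.Finite.preimage
  · exact (add_left_injective m).injOn
  · exact (f.vars.image (fun v : ℕ+ => (v : ℕ))).finite_toSet

/-- The operator `∑_{i ≥ 1} (i+m) p_i ∂_{i+m}` on `K[p_1, p_2, …]`
(a well-defined linear operator, the sum being locally finite on polynomials). -/
noncomputable def sumOp (m : ℕ) : MvPolynomial ℕ+ K →ₗ[K] MvPolynomial ℕ+ K where
  toFun f := ∑ᶠ i : ℕ, ((i + m : ℕ) : K) • (pvar K i * pd K (i + m) f)
  map_add' x y := by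
    have key : ∀ i : ℕ, ((i + m : ℕ) : K) • (pvar K i * pd K (i + m) (x + y)) =
        ((i + m : ℕ) : K) • (pvar K i * pd K (i + m) x) +
          ((i + m : ℕ) : K) • (pvar K i * pd K (i + m) y) := by
      intro i
      rw [map_add, mul_add, smul_add]
    try dsimp only
    rw [finsum_congr key]
    exact finsum_add_distrib (sumOp_support_finite K m x) (sumOp_support_finite K m y)
  map_smul' c x := by
    have key : ∀ i : ℕ, ((i + m : ℕ) : K) • (pvar K i * pd K (i + m) (c • x)) =
        c • (((i + m : ℕ) : K) • (pvar K i * pd K (i + m) x)) := by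
      intro i
      rw [_root_.map_smul, smul_comm]
      congr 1
      rw [mul_smul_comm]
    try dsimp only
    rw [finsum_congr key]
    simp only [RingHom.id_apply]
    exact (smul_finsum' c (sumOp_support_finite K m x)).symm
end SumOp

/-- The `bt`-deformed Virasoro-type operator `L_m` of Theorem 3.5/4.7, acting on the
polynomial ring `K[p_1, p_2, …]`. -/
noncomputable def Lop (K : Type*) [CommRing K] (b t z hbar : K) (m : ℕ) :
    MvPolynomial ℕ+ K →ₗ[K] MvPolynomial ℕ+ K :=
  (((m : K) * Ring.inverse hbar) • pd K m)
    - (1 + b) • (∑ i ∈ Finset.Ioo 0 m,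
        (((i : ℕ) : K) * (((m - i : ℕ)) : K)) • (pd K i ∘ₗ pd K (m - i)))
    - sumOp K m
    - ((b * (m : K) * ((m - 1 : ℕ) : K)) • pd K m)
    - ((z * Ring.inverse hbar * (t - 1) * ((m - 1 : ℕ) : K)) • pd K (m - 1))
    - (if m = 1 then (z * Ring.inverse hbar * Ring.inverse hbar * Ring.inverse (1 + b)) •
        (LinearMap.id : MvPolynomial ℕ+ K →ₗ[K] MvPolynomial ℕ+ K) else 0)
open PairPartition

/-- `i : {1,…,2k} → {1,…,N}` is admissible for `𝔪`: `{a,b} ∈ 𝔪` implies `i a = i b`. -/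
def Admissible {N : ℕ} (k : ℕ) (m : PairPartition k) (i : ℕ → Fin N) : Prop :=
  ∀ a, 1 ≤ a → a ≤ 2 * k → i (m.f a) = i a

/-- `i : {1,…,2k} → {1,…,N}` is strongly admissible for `𝔪`:
for `a, b ∈ {1,…,2k}`, `i a = i b` holds iff `a = b` or `{a,b} ∈ 𝔪`. -/
def StronglyAdmissible {N : ℕ} (k : ℕ) (m : PairPartition k) (i : ℕ → Fin N) : Prop :=
  ∀ a b, 1 ≤ a → a ≤ 2 * k → 1 ≤ b → b ≤ 2 * k → (i a = i b ↔ (a = b ∨ m.f a = b))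

/-- `ĥ^{(t)}_r(𝔪)` evaluated at a real number `t`: the weighted count
`∑_{τ ∈ Mono(𝔪), ℓ(τ) = r} t^{hive(τ)}`. -/
noncomputable def hiveSum {k : ℕ} (m : PairPartition k) (r : ℕ) (t : ℝ) : ℝ :=
  ∑ l ∈ monoFinset m r, t ^ hive l

/-- The `bt`-monotone count `∑_{τ ∈ Mono(𝔪), ℓ(τ) = r} b^{flip(τ)} t^{hive(τ)}`
in `ℤ[b,t]`, with `b = X 0` and `t = X 1`. -/
noncomputable def btSum {k : ℕ} (m : PairPartition k) (r : ℕ) : MvPolynomial (Fin 2) ℤ :=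
  ∑ l ∈ monoFinset m r,
    (MvPolynomial.X 0 : MvPolynomial (Fin 2) ℤ) ^ (flip m l) *
      (MvPolynomial.X 1) ^ (hive l)

/-- The connected `bt`-monotone count
`∑_{τ ∈ CMono(𝔪), ℓ(τ) = r} b^{flip(τ)} t^{hive(τ)}` in `ℚ[b,t]`,
with `b = X 0` and `t = X 1`. -/
noncomputable def cMonoSum {k : ℕ} (m : PairPartition k) (r : ℕ) : MvPolynomial (Fin 2) ℚ :=
  ∑ l ∈ (monoFinset m r).filter (fun l => IsConnectedFact k l),
    (MvPolynomial.X 0 : MvPolynomial (Fin 2) ℚ) ^ (flip m l) *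
      (MvPolynomial.X 1) ^ (hive l)

/-- The operator `c + J_{2i-1}` on the free module with basis `𝒫_k`. -/
noncomputable def affJoddOp {k : ℕ} (c : ℝ) (i : ℕ) (v : PairPartition k → ℝ) :
    PairPartition k → ℝ :=
  fun n => c * v n + JoddOp i v n


/-!
Expanding each power `𝒥_i^a` on basis vectors, the coefficient of `𝔫` in
`t^ℓ 𝒥_{i₁}^{a₁} ⋯ 𝒥_{i_ℓ}^{a_ℓ}(𝔢_k)` is `t^ℓ` times the sum of `b^flip` over the words of
transpositions `(x 2i-1)`, `x < 2i-1`, that carry `𝔫` to `𝔢_k` and whose larger elements form the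
sequence `(2i_ℓ-1)^{a_ℓ} ⋯ (2i₁-1)^{a₁}`. As `i₁ > ⋯ > i_ℓ`, these words are monotone
factorisations of `𝔫`; conversely, run-length encoding of the sorted sequence `b₁ ≤ ⋯ ≤ b_r` of a
monotone factorisation recovers the indices and exponents, with `ℓ` its hive number. So the
coefficient of `𝔫` on the left is the `bt`-monotone count of `𝔫`. On the right, `𝔭_μ` is nonzero
at `𝔫` only for `μ` the coset-type of `𝔫`: the partition formed by the half-lengths of the cycles
of `Γ(𝔫)`.
-/

theorem List.IsChain.and {α : Type*} {R S : α → α → Prop} {l : List α} (hR : l.IsChain R)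
    (hS : l.IsChain S) : l.IsChain fun a b => R a b ∧ S a b := by
  induction hR with
  | nil => exact .nil
  | singleton => exact .singleton _
  | cons_cons h _ ih =>
    rw [List.isChain_cons_cons] at hS ⊢
    exact ⟨⟨h, hS.1⟩, ih hS.2⟩

section RunLength

variable {α : Type*}

def runLengthDecode (M : List (α × ℕ)) : List α :=
  M.flatMap fun q => List.replicate q.2 q.1

lemma length_runLengthDecode (M : List (α × ℕ)) :
    (runLengthDecode M).length = (M.map Prod.snd).sum := by
  simp [runLengthDecode]

lemma mem_map_fst_of_mem_runLengthDecode {M : List (α × ℕ)} {x : α}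
    (hx : x ∈ runLengthDecode M) : x ∈ M.map Prod.fst := by
  obtain ⟨q, hq, hxq⟩ := List.mem_flatMap.1 hx
  exact List.mem_map.2 ⟨q, hq, (List.eq_of_mem_replicate hxq).symm⟩

lemma toFinset_runLengthDecode [DecidableEq α] {M : List (α × ℕ)} (hpos : ∀ q ∈ M, q.2 ≠ 0) :
    (runLengthDecode M).toFinset = (M.map Prod.fst).toFinset := by
  ext x
  simp only [List.mem_toFinset, runLengthDecode, List.mem_flatMap, List.mem_replicate, List.mem_map]
  exact ⟨fun ⟨q, hq, _, hx⟩ => ⟨q, hq, hx.symm⟩, fun ⟨q, hq, hx⟩ => ⟨q, hq, hpos q hq, hx.symm⟩⟩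

variable [DecidableEq α] [Inhabited α]

def runLengthEncode (s : List α) : List (α × ℕ) :=
  (s.splitBy (· == ·)).map fun g => (g.headD default, g.length)

lemma List.eq_replicate_of_mem_splitBy_beq {s g : List α} (hg : g ∈ s.splitBy (· == ·)) :
    g = List.replicate g.length (g.headD default) := by
  have hchain : g.IsChain (· = ·) := (List.isChain_of_mem_splitBy hg).imp fun _ _ => beq_iff_eq.1
  obtain ⟨x, g', rfl⟩ := List.exists_cons_of_ne_nil (List.ne_nil_of_mem_splitBy hg)
  exact List.isChain_eq_iff_eq_replicate.1 hchain x rfl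

lemma runLengthDecode_runLengthEncode (s : List α) :
    runLengthDecode (runLengthEncode s) = s := by
  conv_rhs => rw [← List.flatten_splitBy (· == ·) s]
  rw [runLengthDecode, runLengthEncode, List.flatMap_map, List.flatten_eq_flatMap]
  exact List.flatMap_congr fun g hg => (List.eq_replicate_of_mem_splitBy_beq hg).symm

lemma runLengthEncode_runLengthDecode {M : List (α × ℕ)} (hpos : ∀ q ∈ M, q.2 ≠ 0)
    (hne : M.IsChain fun q q' => q.1 ≠ q'.1) : runLengthEncode (runLengthDecode M) = M := by
  have hsplit : (runLengthDecode M).splitBy (· == ·) = M.map fun q => List.replicate q.2 q.1 := by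
    rw [runLengthDecode, List.flatMap_def]
    refine List.splitBy_flatten ?_ ?_ ?_
    · simp only [List.mem_map, List.replicate_eq_nil_iff, not_exists, not_and]
      exact hpos
    · simp only [List.mem_map, forall_exists_index, and_imp, forall_apply_eq_imp_iff₂]
      exact fun q _ => List.isChain_replicate_of_rel _ (beq_self_eq_true _)
    · rw [List.isChain_map]
      refine hne.imp_of_mem_imp fun q q' hq hq' h => ⟨?_, ?_, ?_⟩
      · simpa using hpos q hq
      · simpa using hpos q' hq'
      · simpa [List.getLast_replicate, List.head_replicate] using h
  rw [runLengthEncode, hsplit, List.map_map]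
  refine (List.map_congr_left fun q hq => ?_).trans (List.map_id _)
  obtain ⟨c, hc⟩ := Nat.exists_eq_succ_of_ne_zero (hpos q hq)
  simp only [Function.comp_apply, hc, List.replicate_succ, List.headD_cons, List.length_cons,
    List.length_replicate]
  exact Prod.ext rfl hc.symm

lemma snd_ne_zero_of_mem_runLengthEncode {s : List α} {q : α × ℕ} (hq : q ∈ runLengthEncode s) :
    q.2 ≠ 0 := by
  obtain ⟨g, hg, rfl⟩ := List.mem_map.1 hq
  exact List.length_pos_iff.2 (List.ne_nil_of_mem_splitBy hg) |>.ne'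

lemma fst_mem_of_mem_runLengthEncode {s : List α} {q : α × ℕ} (hq : q ∈ runLengthEncode s) :
    q.1 ∈ s := by
  obtain ⟨g, hg, rfl⟩ := List.mem_map.1 hq
  obtain ⟨x, g', rfl⟩ := List.exists_cons_of_ne_nil (List.ne_nil_of_mem_splitBy hg)
  rw [← List.flatten_splitBy (· == ·) s]
  exact List.mem_flatten.2 ⟨_, hg, List.mem_cons_self⟩

lemma isChain_runLengthEncode {R : α → α → Prop} {s : List α} (hs : s.Pairwise R) :
    (runLengthEncode s).IsChain fun q q' => R q.1 q'.1 ∧ q.1 ≠ q'.1 := by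
  rw [← List.flatten_splitBy (· == ·) s, List.pairwise_flatten] at hs
  rw [runLengthEncode, List.isChain_map]
  refine (hs.2.isChain.and (List.isChain_getLast_head_splitBy _ s)).imp_of_mem_imp
    fun g g' hg hg' ⟨hR, hg0, hg'0, hlast⟩ => ?_
  obtain ⟨x, l, rfl⟩ := List.exists_cons_of_ne_nil hg0
  obtain ⟨x', l', rfl⟩ := List.exists_cons_of_ne_nil hg'0
  have hrun : ∀ y ∈ x :: l, y = x := fun y hy => by
    rw [List.eq_replicate_of_mem_splitBy_beq hg] at hy
    exact List.eq_of_mem_replicate hy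
  have hl : (x :: l).getLast hg0 = x := hrun _ (List.getLast_mem hg0)
  refine ⟨hR x (by simp) x' (by simp), ?_⟩
  simpa [hl] using hlast

end RunLength

section Expansion

open Finset

variable {R : Type*} [CommRing R] {k : ℕ}

lemma mem_listsLen {S : Finset (ℕ × ℕ)} {n : ℕ} {l : List (ℕ × ℕ)} :
    l ∈ listsLen S n ↔ l.length = n ∧ ∀ t ∈ l, t ∈ S := by
  induction n generalizing l with
  | zero => cases l <;> simp [listsLen]
  | succ n ih => cases l <;> simp [listsLen, ih, and_assoc, and_left_comm]

def jmTranspositions (i : ℕ) : Finset (ℕ × ℕ) :=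
  (Icc 1 (2 * i - 2)).image fun a => (a, 2 * i - 1)

lemma mem_listsLen_jmTranspositions {i a : ℕ} {l : List (ℕ × ℕ)} :
    l ∈ listsLen (jmTranspositions i) a ↔
      l.map Prod.snd = List.replicate a (2 * i - 1) ∧ ∀ t ∈ l, 1 ≤ t.1 ∧ t.1 < t.2 := by
  rw [mem_listsLen, List.eq_replicate_iff, List.length_map]
  simp only [jmTranspositions, mem_image, mem_Icc, List.mem_map, forall_exists_index, and_imp,
    forall_apply_eq_imp_iff₂]
  constructor
  · rintro ⟨hlen, hl⟩
    refine ⟨⟨hlen, fun t ht => ?_⟩, fun t ht => ?_⟩ <;> obtain ⟨a, ⟨ha1, ha2⟩, rfl⟩ := hl t ht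
    · rfl
    · exact ⟨ha1, by omega⟩
  · rintro ⟨⟨hlen, hsnd⟩, hl⟩
    exact ⟨hlen, fun t ht => ⟨t.1, by have := hsnd t ht; have := hl t ht; omega,
      Prod.ext rfl (hsnd t ht).symm⟩⟩

lemma omegab_eq_pow (b : R) (m : PairPartition k) (i j : ℕ) :
    omegab b m i j = b ^ (if (charge m i ↔ charge m j) then 0 else 1) := by
  unfold omegab
  split_ifs <;> simp

lemma JbOp_iterate_apply (b : R) (i a : ℕ) (v : PairPartition k → R) (n : PairPartition k) :
    (JbOp b i)^[a] v n =
      ∑ l ∈ listsLen (jmTranspositions i) a, b ^ flip n l * v (applyFacts l n) := by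
  induction a generalizing v with
  | zero => simp [listsLen, PairPartition.flip, applyFacts]
  | succ a ih =>
    rw [Function.iterate_succ_apply, ih, listsLen,
      sum_image fun _ _ _ _ h => Prod.ext_iff.2 (List.cons_eq_cons.1 h), sum_product,
      jmTranspositions, sum_image fun _ _ _ _ h => (Prod.ext_iff.1 h).1]
    simp only [JbOp, mul_sum]
    rw [sum_comm]
    refine sum_congr rfl fun x _ => sum_congr rfl fun l _ => ?_
    simp only [PairPartition.flip, applyFacts, List.foldr_cons, omegab_eq_pow, pow_add]
    ac_rfl

end Expansion

namespace PairPartition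

variable {k : ℕ}

lemma applyFacts_append (l₁ l₂ : List (ℕ × ℕ)) (m : PairPartition k) :
    applyFacts (l₁ ++ l₂) m = applyFacts l₁ (applyFacts l₂ m) :=
  List.foldr_append

lemma flip_append (m : PairPartition k) (l₁ l₂ : List (ℕ × ℕ)) :
    flip m (l₁ ++ l₂) = flip (applyFacts l₂ m) l₁ + flip m l₂ := by
  induction l₁ with
  | nil => simp [flip]
  | cons t l ih => simp only [List.cons_append, flip, ih, applyFacts_append, add_assoc]

end PairPartition

section Words

open Finset

variable {R : Type*} [CommRing R] {k : ℕ}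

/- The factor of the outermost power `𝒥_{i₁}^{a₁}` acts on `𝔫` first, so it forms the right end
of the word (`applyFacts` applies the last transposition first). -/
def jmWords : List (ℕ × ℕ) → Finset (List (ℕ × ℕ))
  | [] => {[]}
  | ia :: M => (listsLen (jmTranspositions ia.1) ia.2 ×ˢ jmWords M).image fun q => q.2 ++ q.1

lemma applyPows_apply (b : R) (M : List (ℕ × ℕ)) (v : PairPartition k → R)
    (n : PairPartition k) :
    applyPows b M v n = ∑ l ∈ jmWords M, b ^ flip n l * v (applyFacts l n) := by
  induction M generalizing v n with
  | nil => simp [applyPows, jmWords, PairPartition.flip, applyFacts]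
  | cons ia M ih =>
    have hinj : Set.InjOn (fun q : List (ℕ × ℕ) × List (ℕ × ℕ) => q.2 ++ q.1)
        ↑(listsLen (jmTranspositions ia.1) ia.2 ×ˢ jmWords M) := by
      rintro ⟨l₁, l₂⟩ hq ⟨l₁', l₂'⟩ hq' h
      simp only [coe_product, Set.mem_prod, mem_coe, mem_listsLen] at hq hq'
      obtain ⟨h₂, h₁⟩ := List.append_inj' h (hq.1.1.trans hq'.1.1.symm)
      exact Prod.ext h₁ h₂
    rw [applyPows, JbOp_iterate_apply, jmWords, sum_image hinj, sum_product]
    refine sum_congr rfl fun l₁ _ => ?_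
    rw [ih, mul_sum]
    refine sum_congr rfl fun l₂ _ => ?_
    rw [flip_append, applyFacts_append, pow_add]
    ring

def oddSeq (M : List (ℕ × ℕ)) : List ℕ :=
  (runLengthDecode (M.map fun ia => (2 * ia.1 - 1, ia.2))).reverse

lemma oddSeq_cons (ia : ℕ × ℕ) (M : List (ℕ × ℕ)) :
    oddSeq (ia :: M) = oddSeq M ++ List.replicate ia.2 (2 * ia.1 - 1) := by
  simp [oddSeq, runLengthDecode]

lemma mem_jmWords {M l : List (ℕ × ℕ)} :
    l ∈ jmWords M ↔ l.map Prod.snd = oddSeq M ∧ ∀ t ∈ l, 1 ≤ t.1 ∧ t.1 < t.2 := by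
  induction M generalizing l with
  | nil => cases l <;> simp [jmWords, oddSeq, runLengthDecode]
  | cons ia M ih =>
    simp only [jmWords, mem_image, mem_product, Prod.exists, mem_listsLen_jmTranspositions, ih,
      oddSeq_cons, List.map_eq_append_iff]
    constructor
    · rintro ⟨l₁, l₂, ⟨⟨h₁, e₁⟩, h₂, e₂⟩, rfl⟩
      exact ⟨⟨l₂, l₁, rfl, h₂, h₁⟩, List.forall_mem_append.2 ⟨e₂, e₁⟩⟩
    · rintro ⟨⟨l₂, l₁, rfl, h₂, h₁⟩, e⟩
      rw [List.forall_mem_append] at e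
      exact ⟨l₁, l₂, ⟨⟨h₁, e.2⟩, h₂, e.1⟩, rfl⟩

end Words

section IndexPairs

def IsIndexPair (k r : ℕ) (p : List ℕ × List ℕ) : Prop :=
  List.Pairwise (· > ·) p.1 ∧ (∀ i ∈ p.1, 1 ≤ i ∧ i ≤ k) ∧
    p.1.length = p.2.length ∧ (∀ a ∈ p.2, 1 ≤ a) ∧ p.2.sum = r

def IsSortedOddSeq (k r : ℕ) (s : List ℕ) : Prop :=
  s.length = r ∧ s.Pairwise (· ≤ ·) ∧ ∀ x ∈ s, Odd x ∧ x ≤ 2 * k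

def indexPairOf (s : List ℕ) : List ℕ × List ℕ :=
  ((runLengthEncode s.reverse).map fun q => (q.1 + 1) / 2,
    (runLengthEncode s.reverse).map Prod.snd)

variable {k r : ℕ} {p : List ℕ × List ℕ} {s : List ℕ}

namespace IsIndexPair

lemma map_fst_zip (hp : IsIndexPair k r p) : (p.1.zip p.2).map Prod.fst = p.1 :=
  List.map_fst_zip hp.2.2.1.le

lemma map_snd_zip (hp : IsIndexPair k r p) : (p.1.zip p.2).map Prod.snd = p.2 :=
  List.map_snd_zip hp.2.2.1.ge

lemma pairwise_zip (hp : IsIndexPair k r p) :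
    (p.1.zip p.2).Pairwise fun ia ib => ib.1 < ia.1 :=
  List.pairwise_map.1 (hp.map_fst_zip ▸ hp.1)

lemma snd_ne_zero (hp : IsIndexPair k r p) {ia : ℕ × ℕ} (h : ia ∈ p.1.zip p.2) : ia.2 ≠ 0 :=
  Nat.one_le_iff_ne_zero.1 (hp.2.2.2.1 _ (List.of_mem_zip h).2)

lemma mem_oddSeq (hp : IsIndexPair k r p) {x : ℕ} (hx : x ∈ oddSeq (p.1.zip p.2)) :
    ∃ i, (1 ≤ i ∧ i ≤ k) ∧ x = 2 * i - 1 := by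
  obtain ⟨ia, hia, rfl⟩ :=
    List.mem_map.1 (mem_map_fst_of_mem_runLengthDecode (List.mem_reverse.1 hx))
  obtain ⟨ia, hia', rfl⟩ := List.mem_map.1 hia
  exact ⟨ia.1, hp.2.1 _ (List.of_mem_zip hia').1, rfl⟩

end IsIndexPair

lemma oddSeq_indexPairOf (hs : ∀ x ∈ s, Odd x) :
    oddSeq ((indexPairOf s).1.zip (indexPairOf s).2) = s := by
  rw [indexPairOf, List.zip_map', oddSeq, List.map_map]
  have hodd : ∀ q ∈ runLengthEncode s.reverse,
      ((fun ia : ℕ × ℕ => (2 * ia.1 - 1, ia.2)) ∘ fun q : ℕ × ℕ => ((q.1 + 1) / 2, q.2)) q =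
        id q := by
    intro q hq
    obtain ⟨j, hj⟩ := hs q.1 (List.mem_reverse.1 (fst_mem_of_mem_runLengthEncode hq))
    exact Prod.ext (by simp only [Function.comp_apply, id]; omega) rfl
  rw [List.map_congr_left hodd, List.map_id, runLengthDecode_runLengthEncode, List.reverse_reverse]

lemma indexPairOf_oddSeq (hp : IsIndexPair k r p) : indexPairOf (oddSeq (p.1.zip p.2)) = p := by
  have hpos : ∀ q ∈ (p.1.zip p.2).map fun ia => (2 * ia.1 - 1, ia.2), q.2 ≠ 0 := by
    simp only [List.mem_map, forall_exists_index, and_imp, forall_apply_eq_imp_iff₂]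
    exact fun ia hia => hp.snd_ne_zero hia
  have hchain : ((p.1.zip p.2).map fun ia => (2 * ia.1 - 1, ia.2)).IsChain
      fun q q' => q.1 ≠ q'.1 := by
    rw [List.isChain_map]
    exact hp.pairwise_zip.isChain.imp fun ia ib h => by simp only; omega
  rw [indexPairOf, oddSeq, List.reverse_reverse, runLengthEncode_runLengthDecode hpos hchain,
    List.map_map, List.map_map]
  refine Prod.ext ?_ ?_
  · conv_rhs => rw [← hp.map_fst_zip]
    exact List.map_congr_left fun ia _ => by simp only [Function.comp_apply]; omega
  · exact hp.map_snd_zip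

lemma isIndexPair_indexPairOf (hs : IsSortedOddSeq k r s) : IsIndexPair k r (indexPairOf s) := by
  obtain ⟨hlen, hsort, hodd⟩ := hs
  have hmem : ∀ q ∈ runLengthEncode s.reverse, Odd q.1 ∧ q.1 ≤ 2 * k := fun q hq =>
    hodd _ (List.mem_reverse.1 (fst_mem_of_mem_runLengthEncode hq))
  have hdesc : ((runLengthEncode s.reverse).map Prod.fst).Pairwise (· > ·) := by
    refine List.isChain_iff_pairwise.1 ?_
    rw [List.isChain_map]
    exact (isChain_runLengthEncode (List.pairwise_reverse.2 hsort)).imp fun q q' h => by omega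
  refine ⟨?_, ?_, by simp [indexPairOf], ?_, ?_⟩
  · rw [indexPairOf, ← Function.comp_def (fun x => (x + 1) / 2) Prod.fst, ← List.map_map,
      List.pairwise_map]
    refine hdesc.imp_of_mem fun {x y} hx hy hxy => ?_
    obtain ⟨q, hq, rfl⟩ := List.mem_map.1 hx
    obtain ⟨q', hq', rfl⟩ := List.mem_map.1 hy
    obtain ⟨⟨a, ha⟩, -⟩ := hmem q hq
    obtain ⟨⟨b, hb⟩, -⟩ := hmem q' hq'
    show (q'.1 + 1) / 2 < (q.1 + 1) / 2
    omega
  · intro i hi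
    obtain ⟨q, hq, rfl⟩ := List.mem_map.1 hi
    obtain ⟨⟨a, ha⟩, hle⟩ := hmem q hq
    omega
  · intro a ha
    obtain ⟨q, hq, rfl⟩ := List.mem_map.1 ha
    exact Nat.one_le_iff_ne_zero.2 (snd_ne_zero_of_mem_runLengthEncode hq)
  · rw [indexPairOf, ← length_runLengthDecode, runLengthDecode_runLengthEncode,
      List.length_reverse, hlen]

lemma isSortedOddSeq_oddSeq (hp : IsIndexPair k r p) :
    IsSortedOddSeq k r (oddSeq (p.1.zip p.2)) := by
  refine ⟨?_, ?_, fun x hx => ?_⟩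
  · rw [oddSeq, List.length_reverse, length_runLengthDecode, List.map_map]
    change ((p.1.zip p.2).map Prod.snd).sum = r
    rw [hp.map_snd_zip, hp.2.2.2.2]
  · rw [oddSeq, List.pairwise_reverse, runLengthDecode, List.pairwise_flatMap, List.pairwise_map]
    refine ⟨fun q _ => List.pairwise_replicate.2 (Or.inr le_rfl), ?_⟩
    refine hp.pairwise_zip.imp fun {ia ib} h x hx y hy => ?_
    rw [List.eq_of_mem_replicate hx, List.eq_of_mem_replicate hy]
    omega
  · obtain ⟨i, hi, rfl⟩ := hp.mem_oddSeq hx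
    exact ⟨⟨i - 1, by omega⟩, by omega⟩

lemma card_toFinset_oddSeq (hp : IsIndexPair k r p) :
    (oddSeq (p.1.zip p.2)).toFinset.card = p.1.length := by
  have hinj : Function.Injective fun i : ℕ => 2 * i - 1 := fun i j h => by simp only at h; omega
  rw [oddSeq, List.toFinset_reverse, toFinset_runLengthDecode fun q hq => ?_, List.map_map,
    List.toFinset_card_of_nodup]
  · simp [hp.2.2.1]
  · rw [show (Prod.fst ∘ fun ia : ℕ × ℕ => (2 * ia.1 - 1, ia.2)) = (fun i => 2 * i - 1) ∘ Prod.fst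
      from rfl, ← List.map_map, hp.map_fst_zip]
    exact (List.Pairwise.nodup hp.1).map hinj
  · obtain ⟨ia, hia, rfl⟩ := List.mem_map.1 hq
    exact hp.snd_ne_zero (ia := ia) hia

end IndexPairs

section LeftHandSide

open Finset

variable {k r : ℕ} {p : List ℕ × List ℕ}

lemma finite_setOf_isIndexPair (k r : ℕ) : {p | IsIndexPair k r p}.Finite := by
  refine ((List.finite_toSet (List.range (k + 1)).reverse.sublists).prod
    (Set.finite_range (Composition.blocks (n := r)))).subset fun p hp => ⟨?_, ?_⟩
  · refine List.mem_sublists.2 (List.sublist_of_subperm_of_pairwise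
      (List.subperm_of_subset hp.1.nodup fun i hi => ?_) hp.1
      (List.pairwise_reverse.2 List.pairwise_lt_range))
    simp only [List.mem_reverse, List.mem_range]
    have := hp.2.1 i hi
    omega
  · exact ⟨⟨p.2, fun h => hp.2.2.2.1 _ h, hp.2.2.2.2⟩, rfl⟩

noncomputable def indexPairs (k r : ℕ) : Finset (List ℕ × List ℕ) :=
  (finite_setOf_isIndexPair k r).toFinset

lemma mem_indexPairs : p ∈ indexPairs k r ↔ IsIndexPair k r p :=
  Set.Finite.mem_toFinset _

lemma mem_monoFinset_iff {n : PairPartition k} {l : List (ℕ × ℕ)} :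
    l ∈ monoFinset n r ↔ (∀ t ∈ l, 1 ≤ t.1 ∧ t.1 < t.2) ∧ IsSortedOddSeq k r (l.map Prod.snd) ∧
      applyFacts l n = triv k := by
  rw [monoFinset, mem_filter, mem_listsLen]
  simp only [IsMonoFact, IsSortedOddSeq, mem_product, mem_Icc, List.length_map, List.mem_map,
    forall_exists_index, and_imp, forall_apply_eq_imp_iff₂]
  constructor
  · rintro ⟨⟨hlen, -⟩, hent, hsort, htriv⟩
    exact ⟨fun t ht => ⟨(hent t ht).1, (hent t ht).2.1⟩,
      ⟨hlen, hsort, fun t ht => ⟨(hent t ht).2.2.2, (hent t ht).2.2.1⟩⟩, htriv⟩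
  · rintro ⟨hent, ⟨hlen, hsort, hodd⟩, htriv⟩
    refine ⟨⟨hlen, fun t ht => ?_⟩, fun t ht => ?_, hsort, htriv⟩
    · have := hent t ht; have := hodd t ht; omega
    · exact ⟨(hent t ht).1, (hent t ht).2, (hodd t ht).2, (hodd t ht).1⟩

lemma filter_monoFinset_eq (hp : IsIndexPair k r p) (n : PairPartition k) :
    {l ∈ monoFinset n r | indexPairOf (l.map Prod.snd) = p} =
      {l ∈ jmWords (p.1.zip p.2) | applyFacts l n = triv k} := by
  ext l
  simp only [mem_filter, mem_monoFinset_iff, mem_jmWords]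
  constructor
  · rintro ⟨⟨hent, hodd, htriv⟩, rfl⟩
    exact ⟨⟨(oddSeq_indexPairOf fun x hx => (hodd.2.2 x hx).1).symm, hent⟩, htriv⟩
  · rintro ⟨⟨hsnd, hent⟩, htriv⟩
    exact ⟨⟨hent, hsnd ▸ isSortedOddSeq_oddSeq hp, htriv⟩, by rw [hsnd, indexPairOf_oddSeq hp]⟩

lemma sum_indexPairs_apply (n : PairPartition k) :
    (∑ p ∈ indexPairs k r, (X 1 : MvPolynomial (Fin 2) ℤ) ^ p.1.length •
      applyPows (X 0 : MvPolynomial (Fin 2) ℤ) (p.1.zip p.2) (basisVec k (triv k))) n =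
      btSum n r := by
  have hmaps : ∀ l ∈ monoFinset n r, indexPairOf (l.map Prod.snd) ∈ indexPairs k r :=
    fun l hl => mem_indexPairs.2 (isIndexPair_indexPairOf (mem_monoFinset_iff.1 hl).2.1)
  rw [btSum, ← sum_fiberwise_of_maps_to hmaps, Finset.sum_apply]
  refine sum_congr rfl fun p hp => ?_
  have hp := mem_indexPairs.1 hp
  rw [filter_monoFinset_eq hp, sum_filter, Pi.smul_apply, smul_eq_mul, applyPows_apply, mul_sum]
  refine sum_congr rfl fun l hl => ?_
  rw [basisVec]
  split_ifs
  · rw [hive, (mem_jmWords.1 hl).1, card_toFinset_oddSeq hp]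
    ring
  · simp

end LeftHandSide

section CosetType

open Finset
open scoped Pointwise

lemma Finset.card_eq_mul_card_image_of_card_fiber {α β : Type*} [DecidableEq β] (s : Finset α)
    (f : α → β) {c : ℕ} (h : ∀ a ∈ s, #{x ∈ s | f x = f a} = c) : #s = c * #(s.image f) := by
  rw [card_eq_sum_card_image f s, mul_comm, ← smul_eq_mul, ← sum_const]
  refine sum_congr rfl fun b hb => ?_
  obtain ⟨a, ha, rfl⟩ := mem_image.1 hb
  exact h a ha

namespace PairPartition

variable {k : ℕ} (m : PairPartition k)

lemma f_mem_Icc_iff (x : ℕ) : m.f x ∈ Set.Icc 1 (2 * k) ↔ x ∈ Set.Icc 1 (2 * k) := by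
  rw [Set.mem_Icc, Set.mem_Icc, ← m.moves, ← m.moves x, m.invol, ne_comm]

lemma closure_le_stabilizer_Icc : Subgroup.closure {(triv k).perm, m.perm} ≤
    MulAction.stabilizer (Equiv.Perm ℕ) (Set.Icc 1 (2 * k)) := by
  rw [Subgroup.closure_le]
  rintro σ (rfl | rfl)
  · exact MulAction.mem_stabilizer_set.2 (f_mem_Icc_iff (triv k))
  · exact MulAction.mem_stabilizer_set.2 (f_mem_Icc_iff m)

lemma gammaOrbit_subset_Icc {a : ℕ} (ha : a ∈ Set.Icc 1 (2 * k)) :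
    gammaOrbit m a ⊆ Set.Icc 1 (2 * k) := by
  rintro _ ⟨⟨σ, hσ⟩, rfl⟩
  exact (MulAction.mem_stabilizer_set.1 (closure_le_stabilizer_Icc m hσ) a).2 ha

lemma gammaOrbit_eq_iff {a x : ℕ} : gammaOrbit m x = gammaOrbit m a ↔ x ∈ gammaOrbit m a :=
  MulAction.orbit_eq_iff

lemma ncard_gammaOrbit_pos {a : ℕ} (ha : a ∈ Set.Icc 1 (2 * k)) :
    0 < (gammaOrbit m a).ncard :=
  Set.ncard_pos ((Set.finite_Icc _ _).subset (gammaOrbit_subset_Icc m ha)) |>.2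
    ⟨a, MulAction.mem_orbit_self a⟩

lemma even_ncard_gammaOrbit {a : ℕ} (ha : a ∈ Set.Icc 1 (2 * k)) :
    Even (gammaOrbit m a).ncard := by
  have hfin := (Set.finite_Icc 1 (2 * k)).subset (gammaOrbit_subset_Icc m ha)
  -- `𝔢_k` is a fixed-point-free involution of the cycle, so its points cancel in pairs mod 2.
  rw [Set.ncard_eq_toFinset_card _ hfin, ← ZMod.natCast_eq_zero_iff_even, card_eq_sum_ones,
    Nat.cast_sum, Nat.cast_one]
  refine sum_involution (fun x _ => (triv k).f x) (fun _ _ => by decide) (fun x hx _ => ?_)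
    (fun x hx => ?_) (fun x _ => (triv k).invol x)
  · rw [Set.Finite.mem_toFinset] at hx
    exact ((triv k).moves x).2 (gammaOrbit_subset_Icc m ha hx)
  · rw [Set.Finite.mem_toFinset] at hx ⊢
    exact MulAction.mem_orbit_of_mem_orbit
      ⟨(triv k).perm, Subgroup.subset_closure (Set.mem_insert _ _)⟩ hx

noncomputable def gammaCycles : Finset (Set ℕ) :=
  (Icc 1 (2 * k)).image (gammaOrbit m)

lemma card_filter_gammaOrbit_eq {a : ℕ} (ha : a ∈ Icc 1 (2 * k)) :
    #{x ∈ Icc 1 (2 * k) | gammaOrbit m x = gammaOrbit m a} = (gammaOrbit m a).ncard := by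
  rw [← Set.ncard_coe_finset]
  congr 1
  ext x
  rw [coe_filter, Set.mem_ofPred_eq, mem_Icc, gammaOrbit_eq_iff]
  exact ⟨And.right, fun h => ⟨gammaOrbit_subset_Icc m (Finset.mem_Icc.1 ha) h, h⟩⟩

lemma sum_ncard_gammaCycles : ∑ O ∈ gammaCycles m, O.ncard = 2 * k := by
  calc ∑ O ∈ gammaCycles m, O.ncard
      = ∑ O ∈ gammaCycles m, #{x ∈ Icc 1 (2 * k) | gammaOrbit m x = O} := by
        refine sum_congr rfl fun O hO => ?_
        obtain ⟨a, ha, rfl⟩ := mem_image.1 hO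
        exact (card_filter_gammaOrbit_eq m ha).symm
    _ = 2 * k := by rw [gammaCycles, ← card_eq_sum_card_image, Nat.card_Icc, Nat.add_sub_cancel]

lemma even_ncard_of_mem_gammaCycles {O : Set ℕ} (hO : O ∈ gammaCycles m) :
    Even O.ncard ∧ 0 < O.ncard := by
  obtain ⟨a, ha, rfl⟩ := mem_image.1 hO
  exact ⟨even_ncard_gammaOrbit m (mem_Icc.1 ha), ncard_gammaOrbit_pos m (mem_Icc.1 ha)⟩

lemma cycleCount_eq_card {ℓ : ℕ} (hℓ : ℓ ≠ 0) :
    cycleCount m ℓ = #{O ∈ gammaCycles m | O.ncard = 2 * ℓ} := by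
  rw [cycleCount, gammaCycles, filter_image,
    card_eq_mul_card_image_of_card_fiber _ (gammaOrbit m) (c := 2 * ℓ) fun a ha => ?_,
    Nat.mul_div_cancel_left _ (by omega)]
  rw [mem_filter] at ha
  rw [filter_filter, ← ha.2]
  refine (congrArg card (filter_congr fun x _ => ⟨And.right, fun h => ⟨by rw [h], h⟩⟩)).trans
    (card_filter_gammaOrbit_eq m ha.1)

noncomputable def cosetType : Nat.Partition k where
  parts := (gammaCycles m).val.map fun O => O.ncard / 2
  parts_pos := by
    simp only [Multiset.mem_map, mem_val, forall_exists_index, and_imp]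
    rintro _ O hO rfl
    obtain ⟨⟨c, hc⟩, hpos⟩ := even_ncard_of_mem_gammaCycles m hO
    omega
  parts_sum := by
    have hsum := sum_ncard_gammaCycles m
    rw [sum_congr rfl fun O hO => (Nat.two_mul_div_two_of_even
      (even_ncard_of_mem_gammaCycles m hO).1).symm, ← mul_sum] at hsum
    rw [sum_map_val]
    omega

lemma hasCosetType_cosetType : HasCosetType m (cosetType m).parts := by
  intro ℓ hℓ
  rw [cycleCount_eq_card m (by omega), cosetType, Multiset.count_map, ← filter_val, ← card_def]
  refine congrArg card (filter_congr fun O hO => ?_)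
  obtain ⟨⟨c, hc⟩, -⟩ := even_ncard_of_mem_gammaCycles m hO
  omega

lemma eq_cosetType_of_hasCosetType {μ : Nat.Partition k} (h : HasCosetType m μ.parts) :
    μ = cosetType m := by
  refine Nat.Partition.ext (Multiset.ext.2 fun ℓ => ?_)
  rcases Nat.eq_zero_or_pos ℓ with rfl | hℓ
  · rw [Multiset.count_eq_zero.2 fun h0 => (μ.parts_pos h0).false,
      Multiset.count_eq_zero.2 fun h0 => ((cosetType m).parts_pos h0).false]
  · rw [h ℓ hℓ, hasCosetType_cosetType m ℓ hℓ]

end PairPartition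

lemma sum_smul_pVec_apply {R : Type*} [CommRing R] {k : ℕ} (c : Nat.Partition k → R)
    (n : PairPartition k) :
    (∑ μ : Nat.Partition k, c μ • (pVec k μ.parts : PairPartition k → R)) n = c (cosetType n) := by
  rw [Finset.sum_apply, Fintype.sum_eq_single (cosetType n) fun μ hμ => ?_]
  · simp [pVec, hasCosetType_cosetType]
  · simp only [Pi.smul_apply, pVec, if_neg fun h => hμ (eq_cosetType_of_hasCosetType n h),
      smul_zero]

theorem monomial_symmetric_bJucysMurphy_general
    (k r : ℕ)
    (hh : Nat.Partition k → MvPolynomial (Fin 2) ℤ)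
    (hhdef : ∀ (μ : Nat.Partition k) (m : PairPartition k),
      HasCosetType m μ.parts → hh μ = btSum m r) :
    (∑ᶠ (p : List ℕ × List ℕ)
      (_ : List.Pairwise (· > ·) p.1 ∧ (∀ i ∈ p.1, 1 ≤ i ∧ i ≤ k) ∧
           p.1.length = p.2.length ∧ (∀ a ∈ p.2, 1 ≤ a) ∧ p.2.sum = r),
      ((MvPolynomial.X 1 : MvPolynomial (Fin 2) ℤ) ^ p.1.length) •
        applyPows (MvPolynomial.X 0 : MvPolynomial (Fin 2) ℤ) (p.1.zip p.2)
          (basisVec k (triv k)))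
    = ∑ μ : Nat.Partition k, hh μ • (pVec k μ.parts : PairPartition k → MvPolynomial (Fin 2) ℤ) := by
  refine (finsum_cond_eq_sum_of_cond_iff _ fun _ => mem_indexPairs.symm).trans (funext fun n => ?_)
  rw [sum_indexPairs_apply, sum_smul_pVec_apply, hhdef _ n (hasCosetType_cosetType n)]

/-- **Monomial symmetric functions of the `b`-deformed Jucys–Murphy operators and
`bt`-monotone counts** (proof of Proposition 4.24, Equation (4.13)).  Let `k ≥ 1`,
`r ≥ 0`, and let `ĥ_r(μ) = ∑_{τ ∈ Mono(𝔪), ℓ(τ)=r} b^{flip(τ)} t^{hive(τ)}` for any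
pair partition `𝔪` of coset-type `μ ⊢ k`.  In the free `ℤ[b,t]`-module with basis
`𝒫_k` (`b = X 0`, `t = X 1`):
`∑_{ν ⊢ r} t^{ℓ(ν)} m_ν^≥(𝒥_1,…,𝒥_k)(𝔢_k) = ∑_{μ ⊢ k} ĥ_r(μ) · 𝔭_μ`,
the left side being the sum over strictly decreasing index tuples
`k ≥ i₁ > ⋯ > i_ℓ ≥ 1` and all compositions `(a₁,…,a_ℓ)` of `r` into `ℓ` positive
parts of `t^ℓ ⬝ 𝒥_{i₁}^{a₁} ⋯ 𝒥_{i_ℓ}^{a_ℓ}(𝔢_k)` — i.e. exactly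
`∑_{ν ⊢ r} t^{ℓ(ν)}` times the decreasing-index ordered analogue `m_ν^≥` of the
monomial symmetric polynomial. -/
theorem monomial_symmetric_bJucysMurphy
    (k r : ℕ) (hk : 1 ≤ k)
    (hh : Nat.Partition k → MvPolynomial (Fin 2) ℤ)
    (hhdef : ∀ (μ : Nat.Partition k) (m : PairPartition k),
      HasCosetType m μ.parts → hh μ = btSum m r) :
    (∑ᶠ (p : List ℕ × List ℕ)
      (_ : List.Pairwise (· > ·) p.1 ∧ (∀ i ∈ p.1, 1 ≤ i ∧ i ≤ k) ∧
           p.1.length = p.2.length ∧ (∀ a ∈ p.2, 1 ≤ a) ∧ p.2.sum = r),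
      ((MvPolynomial.X 1 : MvPolynomial (Fin 2) ℤ) ^ p.1.length) •
        applyPows (MvPolynomial.X 0 : MvPolynomial (Fin 2) ℤ) (p.1.zip p.2)
          (basisVec k (triv k)))
    = ∑ μ : Nat.Partition k, hh μ • (pVec k μ.parts : PairPartition k → MvPolynomial (Fin 2) ℤ) :=
  monomial_symmetric_bJucysMurphy_general k r hh hhdef
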